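/- arXiv:math-ph/0501073 — 3 statements merged into one kernel-verified Lean document; each statement's English description precedes it below -/
import Mathlib

section
/- Let H be a complex Hilbert space, Ω ∈ H a unit vector, and T a symmetric linear operator defined on a dense subspace D containing Ω, with TΩ, T²Ω, T³Ω ∈ D. Assume ⟨Ω, TΩ⟩ = 0 and TΩ ≠ 0. Then for ψ_α = cos(α)Ω + sin(α)·TΩ/‖TΩ‖ one has ⟨ψ_α, T ψ_α⟩ = ζ sin(2α) + η(1 − cos(2α)), where ζ = ‖TΩ‖ and η = ⟨Ω, T³Ω⟩/(2‖TΩ‖²). Consequently inf_{ψ∈D, ‖ψ‖=1} ⟨ψ, Tψ⟩ ≤ η − √(η² + ζ²) < 0. -/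
open InnerProductSpace

theorem stmt_1 {H : Type*} [NormedAddCommGroup H] [InnerProductSpace ℂ H] [CompleteSpace H]
    (D : Submodule ℂ H) (hD : Dense (D : Set H))
    (T : D →ₗ[ℂ] H)
    (hsymm : ∀ φ χ : D, ⟪T φ, (χ : H)⟫_ℂ = ⟪(φ : H), T χ⟫_ℂ)
    (Ω : D) (hΩ : ‖(Ω : H)‖ = 1)
    (hT1 : T Ω ∈ D) (hT2 : T ⟨T Ω, hT1⟩ ∈ D) (hT3 : T ⟨T ⟨T Ω, hT1⟩, hT2⟩ ∈ D)
    (hvac : ⟪(Ω : H), T Ω⟫_ℂ = 0) (hTΩ : T Ω ≠ 0)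
    (ζ η : ℝ) (hζ : ζ = ‖T Ω‖)
    (hη : (η : ℂ) = ⟪(Ω : H), T ⟨T ⟨T Ω, hT1⟩, hT2⟩⟫_ℂ / (2 * ‖T Ω‖ ^ 2)) :
    (∀ α : ℝ,
      ⟪((Real.cos α • Ω + ((Real.sin α / ‖T Ω‖ : ℝ) : ℂ) • (⟨T Ω, hT1⟩ : D) : D) : H),
        T (Real.cos α • Ω + ((Real.sin α / ‖T Ω‖ : ℝ) : ℂ) • (⟨T Ω, hT1⟩ : D))⟫_ℂ
        = (ζ * Real.sin (2 * α) + η * (1 - Real.cos (2 * α)) : ℝ)) ∧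
    (∃ ψ : D, ‖(ψ : H)‖ = 1 ∧
      (⟪(ψ : H), T ψ⟫_ℂ).re ≤ η - Real.sqrt (η ^ 2 + ζ ^ 2)) ∧
    η - Real.sqrt (η ^ 2 + ζ ^ 2) < 0 := by
  have hu : ‖T Ω‖ ≠ 0 := norm_ne_zero_iff.mpr hTΩ
  have hζpos : 0 < ζ := by rw [hζ]; exact norm_pos_iff.mpr hTΩ
  have i10 : ⟪T Ω, T Ω⟫_ℂ = ((‖T Ω‖ : ℂ))^2 := by
    rw [inner_self_eq_norm_sq_to_K]; norm_num
  have i01 : ⟪(Ω : H), T ⟨T Ω, hT1⟩⟫_ℂ = ((‖T Ω‖ : ℂ))^2 := by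
    rw [← hsymm Ω ⟨T Ω, hT1⟩]; exact i10
  have i11 : ⟪T Ω, T ⟨T Ω, hT1⟩⟫_ℂ = 2 * η * ((‖T Ω‖ : ℂ))^2 := by
    have h := hsymm Ω ⟨T ⟨T Ω, hT1⟩, hT2⟩
    have h2 : ⟪T Ω, T ⟨T Ω, hT1⟩⟫_ℂ = (η : ℂ) * (2 * ‖T Ω‖ ^ 2) := by
      rw [hη]
      have hne : (2 * (‖T Ω‖ : ℂ) ^ 2) ≠ 0 := by simp [hu]
      field_simp
      rw [mul_div_assoc, div_self (by exact_mod_cast hu), mul_one]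
      exact h
    rw [h2]; ring
  have part1 : ∀ α : ℝ,
      ⟪((Real.cos α • Ω + ((Real.sin α / ‖T Ω‖ : ℝ) : ℂ) • (⟨T Ω, hT1⟩ : D) : D) : H),
        T (Real.cos α • Ω + ((Real.sin α / ‖T Ω‖ : ℝ) : ℂ) • (⟨T Ω, hT1⟩ : D))⟫_ℂ
        = (ζ * Real.sin (2 * α) + η * (1 - Real.cos (2 * α)) : ℝ) := by
    intro α
    have e1 : ((Real.cos α • Ω + ((Real.sin α / ‖T Ω‖ : ℝ) : ℂ) • (⟨T Ω, hT1⟩ : D) : D) : H)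
        = (Real.cos α : ℂ) • (Ω : H) + ((Real.sin α / ‖T Ω‖ : ℝ) : ℂ) • (T Ω) := by
      simp [RCLike.real_smul_eq_coe_smul (K := ℂ)]
    have e2 : T (Real.cos α • Ω + ((Real.sin α / ‖T Ω‖ : ℝ) : ℂ) • (⟨T Ω, hT1⟩ : D))
        = (Real.cos α : ℂ) • (T Ω) + ((Real.sin α / ‖T Ω‖ : ℝ) : ℂ) • (T ⟨T Ω, hT1⟩) := by
      have harg : (Real.cos α • Ω + ((Real.sin α / ‖T Ω‖ : ℝ) : ℂ) • (⟨T Ω, hT1⟩ : D) : D)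
          = (Real.cos α : ℂ) • Ω + ((Real.sin α / ‖T Ω‖ : ℝ) : ℂ) • (⟨T Ω, hT1⟩ : D) := by
        congr 1
      rw [harg, map_add, map_smul, map_smul]
    rw [e1, e2]
    simp only [inner_add_left, inner_add_right, inner_smul_left, inner_smul_right,
      hvac, i01, i10, i11, Complex.conj_ofReal, mul_zero]
    rw [hζ, Real.sin_two_mul, Real.cos_two_mul]
    push_cast
    have hne : (‖T Ω‖ : ℂ) ≠ 0 := by exact_mod_cast hu
    have hsc := Complex.sin_sq_add_cos_sq (α : ℂ)
    rw [show Complex.cos (α:ℂ)^2 = 1 - Complex.sin (α:ℂ)^2 by linear_combination hsc]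
    field_simp
    ring
  refine ⟨part1, ?_, ?_⟩
  · set r : ℝ := Real.sqrt (η ^ 2 + ζ ^ 2) with hr
    have hrpos : 0 < r := Real.sqrt_pos.mpr (by positivity)
    have hr2 : r ^ 2 = η ^ 2 + ζ ^ 2 := Real.sq_sqrt (by positivity)
    set z : ℂ := ⟨η, -ζ⟩ with hz
    have hzne : z ≠ 0 := by
      intro h
      have : (-ζ : ℝ) = 0 := congrArg Complex.im h
      linarith
    have habs : ‖z‖ = r := by
      rw [Complex.norm_def, Complex.normSq_mk, hr]
      congr 1
      ring
    set θ : ℝ := Complex.arg z with hθ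
    have hcos : Real.cos θ = η / r := by
      rw [hθ, Complex.cos_arg hzne, habs]
    have hsin : Real.sin θ = -ζ / r := by
      rw [hθ, Complex.sin_arg, habs]
    refine ⟨Real.cos (θ/2) • Ω + ((Real.sin (θ/2) / ‖T Ω‖ : ℝ) : ℂ) • (⟨T Ω, hT1⟩ : D), ?_, ?_⟩
    · have expand : ((Real.cos (θ/2) • Ω + ((Real.sin (θ/2) / ‖T Ω‖ : ℝ) : ℂ) • (⟨T Ω, hT1⟩ : D) : D) : H)
          = ((Real.cos (θ/2) : ℝ) : ℂ) • (Ω : H) + ((Real.sin (θ/2) / ‖T Ω‖ : ℝ) : ℂ) • (T Ω) := by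
        simp [RCLike.real_smul_eq_coe_smul (K := ℂ)]
      rw [expand]
      have horth : ⟪((Real.cos (θ/2) : ℝ) : ℂ) • (Ω : H), ((Real.sin (θ/2) / ‖T Ω‖ : ℝ) : ℂ) • (T Ω)⟫_ℂ = 0 := by
        rw [inner_smul_left, inner_smul_right, hvac]; ring
      have hsq := @norm_add_sq ℂ _ _ _ _ (((Real.cos (θ/2) : ℝ) : ℂ) • (Ω : H)) (((Real.sin (θ/2) / ‖T Ω‖ : ℝ) : ℂ) • (T Ω))
      rw [horth] at hsq
      simp only [map_zero, mul_zero, add_zero] at hsq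
      have h1 : ‖((Real.cos (θ/2) : ℝ) : ℂ) • (Ω : H)‖ = |Real.cos (θ/2)| := by
        rw [norm_smul, hΩ, mul_one, Complex.norm_real, Real.norm_eq_abs]
      have h2 : ‖((Real.sin (θ/2) / ‖T Ω‖ : ℝ) : ℂ) • (T Ω)‖ = |Real.sin (θ/2)| := by
        rw [norm_smul]
        simp only [Complex.norm_real, Real.norm_eq_abs, abs_div, abs_norm]
        field_simp
      rw [h1, h2] at hsq
      have hpyth : Real.sin (θ/2) ^ 2 + Real.cos (θ/2) ^ 2 = 1 := Real.sin_sq_add_cos_sq _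
      have h4 : ‖((Real.cos (θ/2) : ℝ) : ℂ) • (Ω : H) + ((Real.sin (θ/2) / ‖T Ω‖ : ℝ) : ℂ) • (T Ω)‖ ^ 2 = 1 := by
        rw [hsq, sq_abs, sq_abs]; linarith
      calc ‖((Real.cos (θ/2) : ℝ) : ℂ) • (Ω : H) + ((Real.sin (θ/2) / ‖T Ω‖ : ℝ) : ℂ) • (T Ω)‖
          = Real.sqrt (‖((Real.cos (θ/2) : ℝ) : ℂ) • (Ω : H) + ((Real.sin (θ/2) / ‖T Ω‖ : ℝ) : ℂ) • (T Ω)‖ ^ 2) := (Real.sqrt_sq (norm_nonneg _)).symm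
        _ = Real.sqrt 1 := by rw [h4]
        _ = 1 := Real.sqrt_one
    · have hval := part1 (θ/2)
      rw [hval]
      have h2θ : 2 * (θ/2) = θ := by ring
      rw [h2θ, Complex.ofReal_re, hcos, hsin]
      have heq : ζ * (-ζ / r) + η * (1 - η / r) = η - r := by
        field_simp
        linear_combination hr2
      rw [heq]
  · have h2 : Real.sqrt (η ^ 2) < Real.sqrt (η ^ 2 + ζ ^ 2) := by
      apply Real.sqrt_lt_sqrt (by positivity)
      have : 0 < ζ ^ 2 := by positivity
      linarith
    have h3 : η ≤ Real.sqrt (η ^ 2) := by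
      rw [Real.sqrt_sq_eq_abs]; exact le_abs_self η
    linarith
end

section
/- Define Q₃ : [1,∞) → ℝ by Q₃(x) = (1 − 1/x²)^{1/2}·(1 − 1/(2x²)) − (1/(2x⁴))·ln(x + √(x² − 1)). Then 0 ≤ Q₃(x) ≤ 1 for all x ≥ 1. -/
theorem stmt_9 (Q₃ : ℝ → ℝ)
    (hQ : ∀ x : ℝ, 1 ≤ x →
      Q₃ x = Real.sqrt (1 - 1 / x ^ 2) * (1 - 1 / (2 * x ^ 2))
        - (1 / (2 * x ^ 4)) * Real.log (x + Real.sqrt (x ^ 2 - 1))) :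
    ∀ x : ℝ, 1 ≤ x → 0 ≤ Q₃ x ∧ Q₃ x ≤ 1 := by
  intro x hx
  have hx0 : (0:ℝ) < x := lt_of_lt_of_le one_pos hx
  have hx2 : (1:ℝ) ≤ x ^ 2 := by nlinarith
  set s := Real.sqrt (x ^ 2 - 1) with hs
  have hs0 : 0 ≤ s := Real.sqrt_nonneg _
  have hs2 : s ^ 2 = x ^ 2 - 1 := Real.sq_sqrt (by nlinarith)
  have hsx : s ≤ x := by nlinarith
  have hsqrt : Real.sqrt (1 - 1 / x ^ 2) = s / x := by
    rw [show 1 - 1 / x ^ 2 = (x ^ 2 - 1) / x ^ 2 by field_simp]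
    rw [Real.sqrt_div (by nlinarith), Real.sqrt_sq hx0.le]
  have hcosh : x ≤ Real.cosh s := by
    have h1 : Real.cosh s ^ 2 = Real.sinh s ^ 2 + 1 := Real.cosh_sq s
    have h2 : s ≤ Real.sinh s := Real.self_le_sinh_iff.2 hs0
    have h3 : 0 < Real.cosh s := Real.cosh_pos s
    nlinarith
  have hlog_le : Real.log (x + s) ≤ s := by
    have h1 : x + s ≤ Real.exp s := by
      have := Real.cosh_add_sinh s
      have h2 : s ≤ Real.sinh s := Real.self_le_sinh_iff.2 hs0
      nlinarith
    calc Real.log (x + s) ≤ Real.log (Real.exp s) :=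
          Real.log_le_log (by linarith) h1
      _ = s := Real.log_exp s
  have hlog0 : 0 ≤ Real.log (x + s) := Real.log_nonneg (by linarith)
  rw [hQ x hx, hsqrt]
  constructor
  · have key : s / x * (1 - 1 / (2 * x ^ 2)) - 1 / (2 * x ^ 4) * s
        = s * (2 * x ^ 3 - x - 1) / (2 * x ^ 4) := by
      field_simp
    have h4 : 0 ≤ s * (2 * x ^ 3 - x - 1) / (2 * x ^ 4) := by
      apply div_nonneg
      · exact mul_nonneg hs0 (by nlinarith)
      · positivity
    nlinarith [mul_le_mul_of_nonneg_left hlog_le (by positivity : (0:ℝ) ≤ 1 / (2 * x ^ 4))]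
  · have h1 : s / x ≤ 1 := by
      rw [div_le_one hx0]; exact hsx
    have h2 : 1 - 1 / (2 * x ^ 2) ≤ 1 := by
      have : 0 < 1 / (2 * x ^ 2) := by positivity
      linarith
    have h3 : 0 ≤ 1 - 1 / (2 * x ^ 2) := by
      have : 1 / (2 * x ^ 2) ≤ 1 / 2 := by
        apply div_le_div_of_nonneg_left <;> nlinarith
      linarith
    have h4 : 0 ≤ s / x := by positivity
    nlinarith [mul_nonneg (by positivity : (0:ℝ) ≤ 1 / (2 * x ^ 4)) hlog0]
end

section
/- Let V be a real 4-dimensional vector space with a Lorentzian inner product η of signature (+,−,−,−), and let T be a symmetric bilinear form on V. Then T(u,v) ≥ 0 for all timelike future-directed u, v if and only if for every timelike future-directed v, the vector Π with η(Π, w) = T(v, w) for all w is either zero or causal (timelike or null) and future-directed. -/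
set_option maxHeartbeats 1000000 in
theorem stmt_14 {V : Type*} [AddCommGroup V] [Module ℝ V]
    (η T : V →ₗ[ℝ] V →ₗ[ℝ] ℝ)
    (b : Module.Basis (Fin 4) ℝ V)
    (hηb : ∀ i j : Fin 4, η (b i) (b j) =
      if i = j then (if i = 0 then 1 else -1) else 0)
    (hηsymm : ∀ u v : V, η u v = η v u)
    (hTsymm : ∀ u v : V, T u v = T v u)
    -- time orientation: a timelike or null vector w is future-directed iff 0 < η w (b 0)
    :
    (∀ u v : V, (0 < η u u ∧ 0 < η u (b 0)) → (0 < η v v ∧ 0 < η v (b 0)) →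
        0 ≤ T u v)
    ↔
    (∀ v : V, (0 < η v v ∧ 0 < η v (b 0)) →
      ∀ P : V, (∀ w : V, η P w = T v w) →
        P = 0 ∨ (0 ≤ η P P ∧ 0 < η P (b 0))) := by
  -- coordinate formula for η
  have hA : ∀ u w : V, η u w =
      b.repr u 0 * b.repr w 0 - b.repr u 1 * b.repr w 1
      - b.repr u 2 * b.repr w 2 - b.repr u 3 * b.repr w 3 := by
    intro u w
    conv_lhs => rw [← b.sum_repr u, ← b.sum_repr w, Fin.sum_univ_four, Fin.sum_univ_four]
    simp [Fin.sum_univ_four, hηb, map_add, map_smul]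
    ring
  have hrb : ∀ i j : Fin 4, b.repr (b i) j = if i = j then 1 else 0 := by
    intro i j; simp [Module.Basis.repr_self, Finsupp.single_apply]
  have hb0 : ∀ u : V, η u (b 0) = b.repr u 0 := by
    intro u; rw [hA]; simp [hrb]
  constructor
  · -- forward direction
    intro h v hv P hP
    by_cases hP0 : P = 0
    · exact Or.inl hP0
    right
    obtain ⟨p, hp⟩ : ∃ p : Fin 4 → ℝ, ∀ i, p i = b.repr P i := ⟨_, fun _ => rfl⟩
    -- η P u ≥ 0 for all timelike future-directed u
    have key : ∀ u : V, (0 < η u u ∧ 0 < η u (b 0)) → 0 ≤ η P u := by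
      intro u hu
      rw [hP u]
      exact h v u hv hu
    obtain ⟨s, hs⟩ : ∃ s : ℝ, s = Real.sqrt (p 1 ^ 2 + p 2 ^ 2 + p 3 ^ 2) := ⟨_, rfl⟩
    have hs0 : 0 ≤ s := hs ▸ Real.sqrt_nonneg _
    have hssq : s ^ 2 = p 1 ^ 2 + p 2 ^ 2 + p 3 ^ 2 := by
      rw [hs]; exact Real.sq_sqrt (by positivity)
    -- main inequality for ε > 0
    have main : ∀ ε : ℝ, 0 < ε → 0 ≤ p 0 * (s + ε) - s ^ 2 := by
      intro ε hε
      obtain ⟨u, hu⟩ : ∃ u : V, u = (s + ε) • b 0 + p 1 • b 1 + p 2 • b 2 + p 3 • b 3 := ⟨_, rfl⟩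
      have hru : ∀ j : Fin 4, b.repr u j =
          (s + ε) * (if (0:Fin 4) = j then 1 else 0) + p 1 * (if (1:Fin 4) = j then 1 else 0)
          + p 2 * (if (2:Fin 4) = j then 1 else 0) + p 3 * (if (3:Fin 4) = j then 1 else 0) := by
        intro j
        rw [hu]
        simp [map_add, map_smul, Module.Basis.repr_self, Finsupp.single_apply]
        split_ifs <;> ring
      have hru0 : b.repr u 0 = s + ε := by rw [hru]; simp
      have hru1 : b.repr u 1 = p 1 := by rw [hru]; simp
      have hru2 : b.repr u 2 = p 2 := by rw [hru]; simp
      have hru3 : b.repr u 3 = p 3 := by rw [hru]; simp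
      have huu : 0 < η u u := by
        rw [hA, hru0, hru1, hru2, hru3]
        nlinarith [hssq, hs0, hε]
      have hub0 : 0 < η u (b 0) := by
        rw [hb0, hru0]; linarith
      have := key u ⟨huu, hub0⟩
      rw [hA, hru0, hru1, hru2, hru3] at this
      simp only [← hp] at this
      nlinarith [hssq]
    -- p 0 ≥ 0
    have hp0nn : 0 ≤ p 0 := by
      by_contra hneg
      push_neg at hneg
      have := main 1 one_pos
      nlinarith
    -- p 0 ≥ s
    have hp0s : s ≤ p 0 := by
      by_contra hlt
      push_neg at hlt
      have hspos : 0 < s := lt_of_le_of_lt hp0nn hlt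
      have := main ((s - p 0) / 2) (by linarith)
      nlinarith [mul_pos (sub_pos.mpr hlt) (show (0:ℝ) < 2 * s - p 0 by linarith)]
    -- p 0 > 0
    have hp0pos : 0 < p 0 := by
      rcases lt_or_eq_of_le hp0nn with h' | h'
      · exact h'
      exfalso
      have hs0' : s = 0 := le_antisymm (h' ▸ hp0s) hs0
      have h1 : p 1 = 0 ∧ p 2 = 0 ∧ p 3 = 0 := by
        have : p 1 ^ 2 + p 2 ^ 2 + p 3 ^ 2 = 0 := by rw [← hssq, hs0']; ring
        constructor
        · nlinarith [sq_nonneg (p 1), sq_nonneg (p 2), sq_nonneg (p 3)]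
        constructor
        · nlinarith [sq_nonneg (p 1), sq_nonneg (p 2), sq_nonneg (p 3)]
        · nlinarith [sq_nonneg (p 1), sq_nonneg (p 2), sq_nonneg (p 3)]
      apply hP0
      have e : P = b.repr P 0 • b 0 + b.repr P 1 • b 1 + b.repr P 2 • b 2
          + b.repr P 3 • b 3 := by
        conv_lhs => rw [← b.sum_repr P]
        rw [Fin.sum_univ_four]
      rw [e, ← hp 0, ← hp 1, ← hp 2, ← hp 3, ← h', h1.1, h1.2.1, h1.2.2]
      simp
    constructor
    · rw [hA]
      simp only [← hp]
      nlinarith [hssq]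
    · rw [hb0, ← hp 0]
      exact hp0pos
  · -- backward direction
    intro h u v hu hv
    -- construct P
    obtain ⟨P, hPdef⟩ : ∃ P : V, P = T v (b 0) • b 0 + (-(T v (b 1))) • b 1
        + (-(T v (b 2))) • b 2 + (-(T v (b 3))) • b 3 := ⟨_, rfl⟩
    have hrP : ∀ j : Fin 4, b.repr P j =
        T v (b 0) * (if (0:Fin 4) = j then 1 else 0)
        + (-(T v (b 1))) * (if (1:Fin 4) = j then 1 else 0)
        + (-(T v (b 2))) * (if (2:Fin 4) = j then 1 else 0)
        + (-(T v (b 3))) * (if (3:Fin 4) = j then 1 else 0) := by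
      intro j
      rw [hPdef]
      simp [map_add, map_smul, Module.Basis.repr_self, Finsupp.single_apply]
      split_ifs <;> ring
    have hrP0 : b.repr P 0 = T v (b 0) := by rw [hrP]; simp
    have hrP1 : b.repr P 1 = -(T v (b 1)) := by rw [hrP]; simp
    have hrP2 : b.repr P 2 = -(T v (b 2)) := by rw [hrP]; simp
    have hrP3 : b.repr P 3 = -(T v (b 3)) := by rw [hrP]; simp
    have hTw : ∀ w : V, T v w = b.repr w 0 * T v (b 0) + b.repr w 1 * T v (b 1)
        + b.repr w 2 * T v (b 2) + b.repr w 3 * T v (b 3) := by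
      intro w
      conv_lhs => rw [← b.sum_repr w, Fin.sum_univ_four]
      simp [Fin.sum_univ_four, map_add, map_smul]
      try ring
    have hP : ∀ w : V, η P w = T v w := by
      intro w
      rw [hA, hrP0, hrP1, hrP2, hrP3, hTw w]
      ring
    rcases h v hv P hP with h0 | ⟨hPP, hPb0⟩
    · have : T v u = 0 := by rw [← hP u, h0]; simp
      rw [hTsymm u v, this]
    · -- reverse Cauchy-Schwarz
      have hTvu : T v u = η P u := (hP u).symm
      rw [hTsymm u v, hTvu]
      rw [hA] at hPP ⊢
      rw [hb0] at hPb0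
      rw [hA, hb0] at hu
      obtain ⟨huu, hu0⟩ := hu
      nlinarith [sq_nonneg (b.repr P 1 * b.repr u 2 - b.repr P 2 * b.repr u 1),
        sq_nonneg (b.repr P 1 * b.repr u 3 - b.repr P 3 * b.repr u 1),
        sq_nonneg (b.repr P 2 * b.repr u 3 - b.repr P 3 * b.repr u 2),
        mul_pos hPb0 hu0,
        sq_nonneg (b.repr P 0 * b.repr u 0 + b.repr P 1 * b.repr u 1 + b.repr P 2 * b.repr u 2 + b.repr P 3 * b.repr u 3),
        mul_nonneg hPP huu.le]
end
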